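/- arXiv:1910.12102 — 4 statements merged into one kernel-verified Lean document; each statement's English description precedes it below -/
import Mathlib

section
/- For every integer k ≥ 1, Φ_k(P_2) = C(k,2) and Φ_k(P_3) = k·C(k,2), and for every integer n ≥ 4, Φ_k(P_n) = C(k,2)·k^{n−2} + k·Φ_k(P_{n−2}). -/
/-!
For `n ≥ 2` the only automorphisms of `P_n` are the identity and the reversal `v ↦ n - 1 - v`
(an automorphism sends consecutive vertices to consecutive vertices and is injective, so it is
monotone in one direction). Hence a coloring is distinguishing exactly when it is not a palindrome,
and the two automorphisms act freely on distinguishing colorings, giving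
`2 Φ_k(P_n) = k^n - k^⌈n/2⌉`. The base values and the recurrence then follow from
`2 C(k,2) = k^2 - k`.
-/

open SimpleGraph

def IsDistinguishing {V : Type*} {k : ℕ} (G : SimpleGraph V) (c : V → Fin k) : Prop :=
  ∀ α : G ≃g G, (∀ v, c (α v) = c v) → ∀ v, α v = v

noncomputable def Phi {V : Type*} (G : SimpleGraph V) (k : ℕ) : ℕ :=
  Nat.card (Quot (fun c₁ c₂ : {c : V → Fin k // IsDistinguishing G c} =>
    ∃ α : G ≃g G, ∀ v, c₁.1 v = c₂.1 (α v)))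

noncomputable def phi {V : Type*} (G : SimpleGraph V) (k : ℕ) : ℕ :=
  Nat.card (Quot (fun c₁ c₂ : {c : V → Fin k // IsDistinguishing G c ∧ Function.Surjective c} =>
    ∃ α : G ≃g G, ∀ v, c₁.1 v = c₂.1 (α v)))

noncomputable def theta {V : Type*} (G : SimpleGraph V) : ℕ :=
  sInf {t | ∀ k, t ≤ k → ∀ c : V → Fin k, Function.Surjective c → IsDistinguishing G c}

def stirling2 : ℕ → ℕ → ℕ
  | 0, 0 => 1
  | 0, _ + 1 => 0
  | _ + 1, 0 => 0
  | n + 1, k + 1 => (k + 1) * stirling2 n (k + 1) + stirling2 n k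

def IsDCPartition {V : Type*} [DecidableEq V] [Fintype V] (G : SimpleGraph V)
    (P : Finpartition (Finset.univ : Finset V)) : Prop :=
  ∀ α : G ≃g G, (∀ p ∈ P.parts, p.image ⇑α = p) → ∀ v, α v = v

def IsDPartition {V : Type*} [DecidableEq V] [Fintype V] (G : SimpleGraph V)
    (P : Finpartition (Finset.univ : Finset V)) : Prop :=
  ∀ α : G ≃g G, P.parts.image (fun p => p.image ⇑α) = P.parts → ∀ v, α v = v

def PartEquiv {V : Type*} [DecidableEq V] [Fintype V] (G : SimpleGraph V)
    (P₁ P₂ : Finpartition (Finset.univ : Finset V)) : Prop :=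
  ∃ α : G ≃g G, P₁.parts.image (fun p => p.image ⇑α) = P₂.parts

noncomputable def psi {V : Type*} [DecidableEq V] [Fintype V] (G : SimpleGraph V) (k : ℕ) : ℕ :=
  Nat.card (Quot (fun P₁ P₂ : {P : Finpartition (Finset.univ : Finset V) //
      IsDCPartition G P ∧ P.parts.card = k} => PartEquiv G P₁.1 P₂.1))

noncomputable def PsiAtMost {V : Type*} [DecidableEq V] [Fintype V] (G : SimpleGraph V) (k : ℕ) : ℕ :=
  Nat.card (Quot (fun P₁ P₂ : {P : Finpartition (Finset.univ : Finset V) //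
      IsDCPartition G P ∧ P.parts.card ≤ k} => PartEquiv G P₁.1 P₂.1))

noncomputable def PiAtMost {V : Type*} [DecidableEq V] [Fintype V] (G : SimpleGraph V) (k : ℕ) : ℕ :=
  Nat.card (Quot (fun P₁ P₂ : {P : Finpartition (Finset.univ : Finset V) //
      P.parts.card ≤ k} => PartEquiv G P₁.1 P₂.1))

noncomputable def XiAtMost {V : Type*} [DecidableEq V] [Fintype V] (G : SimpleGraph V) (k : ℕ) : ℕ :=
  Nat.card (Quot (fun P₁ P₂ : {P : Finpartition (Finset.univ : Finset V) //
      IsDPartition G P ∧ P.parts.card ≤ k} => PartEquiv G P₁.1 P₂.1))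

def kneserGraph2 (n : ℕ) : SimpleGraph {s : Finset (Fin n) // s.card = 2} where
  Adj a b := Disjoint a.1 b.1
  symm := ⟨fun a b h => h.symm⟩
  loopless := by
    refine ⟨?_⟩
    rintro ⟨s, hs⟩ h
    simp only [disjoint_self, Finset.bot_eq_empty] at h
    simp [h] at hs

def lexProd {V W : Type*} (X : SimpleGraph V) (Y : SimpleGraph W) : SimpleGraph (V × W) where
  Adj a b := X.Adj a.1 b.1 ∨ (a.1 = b.1 ∧ Y.Adj a.2 b.2)
  symm := by
    refine ⟨?_⟩
    rintro ⟨x, y⟩ ⟨x', y'⟩ (h | ⟨h, h'⟩)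
    · exact Or.inl h.symm
    · exact Or.inr ⟨h.symm, h'.symm⟩
  loopless := by
    refine ⟨?_⟩
    rintro ⟨x, y⟩ (h | ⟨-, h⟩)
    · exact X.irrefl h
    · exact Y.irrefl h

def IsNaturalAut {V W : Type*} (X : SimpleGraph V) (Y : SimpleGraph W)
    (μ : lexProd X Y ≃g lexProd X Y) : Prop :=
  ∀ x : V, ∃ x' : V, (fun p => μ p) '' ({x} ×ˢ (Set.univ : Set W)) = {x'} ×ˢ (Set.univ : Set W)

noncomputable def distNumber {V : Type*} (G : SimpleGraph V) : ℕ :=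
  sInf {k | ∃ c : V → Fin k, IsDistinguishing G c}

theorem Nat.two_mul_choose_two_add_self (k : ℕ) : 2 * k.choose 2 + k = k ^ 2 := by
  induction k with
  | zero => rfl
  | succ k ih =>
    rw [Nat.choose_succ_succ', Nat.choose_one_right]
    linarith

namespace SimpleGraph

section Orbits

variable {V : Type*} {G : SimpleGraph V} {k : ℕ}

theorem IsDistinguishing.comp_iso {c : V → Fin k} (hc : IsDistinguishing G c) (α : G ≃g G) :
    IsDistinguishing G (c ∘ α) := by
  intro β hβ v
  have hconj : ∀ w, α (β (α.symm w)) = w :=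
    hc (α.symm.trans (β.trans α)) fun w => by simpa using hβ (α.symm w)
  exact α.injective (by simpa using hconj (α v))

theorem IsDistinguishing.comp_iso_injective {c : V → Fin k} (hc : IsDistinguishing G c) :
    Function.Injective fun α : G ≃g G => c ∘ α := by
  intro α β hαβ
  have h : ∀ w, α (β.symm w) = w :=
    hc (β.symm.trans α) fun w => by simpa using congrFun hαβ (β.symm w)
  exact RelIso.ext fun v => by simpa using h (β v)

variable (G k) in
def AutRel (c₁ c₂ : {c : V → Fin k // IsDistinguishing G c}) : Prop :=
  ∃ α : G ≃g G, ∀ v, c₁.1 v = c₂.1 (α v)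

variable (G k) in
theorem equivalence_autRel : Equivalence (AutRel G k) where
  refl _ := ⟨Iso.refl, fun _ => rfl⟩
  symm := fun ⟨α, h⟩ => ⟨α.symm, fun v => by simpa using (h (α.symm v)).symm⟩
  trans := fun ⟨α, h⟩ ⟨β, h'⟩ => ⟨α.trans β, fun v => (h v).trans (h' (α v))⟩

variable (G k) in
theorem Phi_mul_card_iso [Finite V] :
    Phi G k * Nat.card (G ≃g G) = Nat.card {c : V → Fin k // IsDistinguishing G c} := by
  set r := AutRel G k
  have fiber (c) : {c' // Quot.mk r c' = Quot.mk r c} ≃ (G ≃g G) :=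
    (Equiv.ofBijective (fun α => ⟨⟨c.1 ∘ α, c.2.comp_iso α⟩, Quot.sound ⟨α, fun _ => rfl⟩⟩)
      ⟨fun α β h => c.2.comp_iso_injective (congrArg (·.1.1) h), fun ⟨c', hc'⟩ => by
        obtain ⟨α, hα⟩ := ((equivalence_autRel G k).eqvGen_iff).1 (Quot.eqvGen_exact hc')
        exact ⟨α, Subtype.ext (Subtype.ext (funext hα).symm)⟩⟩).symm
  have : Fintype (Quot r) := Fintype.ofFinite _
  calc Phi G k * Nat.card (G ≃g G) = ∑ _q : Quot r, Nat.card (G ≃g G) := by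
        rw [Finset.sum_const, Finset.card_univ, smul_eq_mul, ← Nat.card_eq_fintype_card]; rfl
    _ = ∑ q : Quot r, Nat.card {c // Quot.mk r c = q} :=
        Finset.sum_congr rfl fun q _ => by
          obtain ⟨c, rfl⟩ := Quot.exists_rep q
          exact (Nat.card_congr (fiber c)).symm
    _ = _ := by rw [← Nat.card_sigma, Nat.card_congr (Equiv.sigmaFiberEquiv _)]

end Orbits

namespace pathGraph

variable {n k : ℕ}

def revIso (n : ℕ) : pathGraph n ≃g pathGraph n where
  toEquiv := Fin.revPerm
  map_rel_iff' := by simp only [Fin.revPerm_apply, pathGraph_adj, Fin.val_rev]; omega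

@[simp]
theorem revIso_apply (v : Fin n) : revIso n v = v.rev := rfl

theorem val_apply_succ_of_val_apply_succ (α : pathGraph n ≃g pathGraph n) {u v w : Fin n}
    (huv : u.val + 1 = v.val) (hvw : v.val + 1 = w.val) (h : (α u).val + 1 = (α v).val) :
    (α v).val + 1 = (α w).val := by
  have hadj := α.map_adj_iff.2 (pathGraph_adj.2 (.inl hvw))
  have hwu : (α w).val ≠ (α u).val := Fin.val_ne_of_ne (α.injective.ne (Fin.ne_of_val_ne (by omega)))
  rw [pathGraph_adj] at hadj
  omega

theorem eq_refl_of_val_apply_one (α : pathGraph n ≃g pathGraph n) (hn : 1 < n)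
    (h : (α ⟨0, by omega⟩).val + 1 = (α ⟨1, hn⟩).val) : α = Iso.refl := by
  have step (i : ℕ) (hi : i + 1 < n) : (α ⟨i, by omega⟩).val + 1 = (α ⟨i + 1, hi⟩).val := by
    induction i with
    | zero => exact h
    | succ i ih => exact val_apply_succ_of_val_apply_succ α rfl rfl (ih (by omega))
  have shift (i : ℕ) (hi : i < n) : (α ⟨i, hi⟩).val = (α ⟨0, by omega⟩).val + i := by
    induction i with
    | zero => rfl
    | succ i ih => rw [← step i hi, ih (by omega), add_assoc]
  have h0 : (α ⟨0, by omega⟩).val = 0 := by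
    have := shift (n - 1) (by omega)
    have := (α ⟨n - 1, by omega⟩).isLt
    omega
  exact RelIso.ext fun v => Fin.ext (by simpa [h0] using shift v v.isLt)

theorem iso_eq_refl_or_revIso (α : pathGraph n ≃g pathGraph n) : α = Iso.refl ∨ α = revIso n := by
  rcases lt_or_ge n 2 with hn | hn
  · have : Subsingleton (Fin n) := Fin.subsingleton_iff_le_one.2 (by omega)
    exact .inl (RelIso.ext fun _ => Subsingleton.elim _ _)
  have hadj := α.map_adj_iff.2 (pathGraph_adj.2 (.inl rfl) : (pathGraph n).Adj ⟨0, by omega⟩ ⟨1, hn⟩)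
  rw [pathGraph_adj] at hadj
  rcases hadj with h | h
  · exact .inl (eq_refl_of_val_apply_one α hn h)
  · have hrev := eq_refl_of_val_apply_one (α.trans (revIso n)) hn (by simp [Fin.val_rev]; omega)
    exact .inr (RelIso.ext fun v => by simpa using congrArg (Fin.rev ∘ (· v)) hrev)

theorem card_iso (hn : 2 ≤ n) : Nat.card (pathGraph n ≃g pathGraph n) = 2 := by
  refine Nat.card_eq_two_iff.2 ⟨Iso.refl, revIso n, fun h => ?_, ?_⟩
  · have := congrArg Fin.val (congrArg (· ⟨0, by omega⟩) h)
    simp [Fin.val_rev] at this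
    omega
  · ext α
    simpa using (iso_eq_refl_or_revIso α)

theorem isDistinguishing_iff (hn : 2 ≤ n) (c : Fin n → Fin k) :
    IsDistinguishing (pathGraph n) c ↔ ¬ ∀ v, c v.rev = c v := by
  refine ⟨fun hd hc => ?_, fun hc α hα => ?_⟩
  · have := congrArg Fin.val (hd (revIso n) hc ⟨0, by omega⟩)
    simp [Fin.val_rev] at this
    omega
  · rcases iso_eq_refl_or_revIso α with rfl | rfl
    · exact fun _ => rfl
    · exact absurd (by simpa using hα) hc

def palindromeEquiv (n k : ℕ) :
    {c : Fin n → Fin k // ∀ v, c v.rev = c v} ≃ (Fin ((n + 1) / 2) → Fin k) where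
  toFun c j := c.1 (Fin.castLE (by omega) j)
  invFun g := ⟨fun v => g ⟨min v (n - 1 - v), by omega⟩, fun v => by
    have := v.isLt
    exact congrArg g (Fin.ext (by simp only [Fin.val_rev]; omega))⟩
  left_inv c := Subtype.ext <| funext fun v => by
    rcases le_total v.val (n - 1 - v) with h | h
    · exact congrArg c.1 (Fin.ext (by simp; omega))
    · rw [← c.2 v]
      exact congrArg c.1 (Fin.ext (by simp [Fin.val_rev]; omega))
  right_inv g := by
    funext j
    exact congrArg g (Fin.ext (by simp; omega))

theorem card_palindrome :
    Nat.card {c : Fin n → Fin k // ∀ v, c v.rev = c v} = k ^ ((n + 1) / 2) := by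
  rw [Nat.card_congr (palindromeEquiv n k)]
  simp

theorem card_isDistinguishing_add_pow (hn : 2 ≤ n) :
    Nat.card {c : Fin n → Fin k // IsDistinguishing (pathGraph n) c} + k ^ ((n + 1) / 2) = k ^ n := by
  rw [Nat.card_congr (Equiv.subtypeEquivRight (isDistinguishing_iff hn)), ← card_palindrome,
    ← Nat.card_sum, Nat.card_congr ((Equiv.sumComm _ _).trans (Equiv.sumCompl _))]
  simp

theorem two_mul_Phi_add (hn : 2 ≤ n) :
    2 * Phi (pathGraph n) k + k ^ ((n + 1) / 2) = k ^ n := by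
  have h := Phi_mul_card_iso (pathGraph n) k
  rw [card_iso hn] at h
  rw [mul_comm, h, card_isDistinguishing_add_pow hn]

end pathGraph

end SimpleGraph

theorem Phi_pathGraph_general (k : ℕ) :
    Phi (pathGraph 2) k = k.choose 2 ∧
    Phi (pathGraph 3) k = k * k.choose 2 ∧
    ∀ n : ℕ, 4 ≤ n →
      Phi (pathGraph n) k = k.choose 2 * k ^ (n - 2) + k * Phi (pathGraph (n - 2)) k := by
  have hC := Nat.two_mul_choose_two_add_self k
  have hΦ (n : ℕ) (hn : 2 ≤ n) := pathGraph.two_mul_Phi_add (k := k) hn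
  refine ⟨?_, ?_, fun n hn => ?_⟩
  · have h2 := hΦ 2 le_rfl
    norm_num at h2
    linarith
  · have h3 := hΦ 3 (by norm_num)
    norm_num at h3
    linarith [congrArg (k * ·) hC]
  · obtain ⟨m, rfl⟩ : ∃ m, n = m + 2 := ⟨n - 2, by omega⟩
    have hm := hΦ m (by omega)
    have hm2 := hΦ (m + 2) (by omega)
    rw [show (m + 2 + 1) / 2 = (m + 1) / 2 + 1 by omega, pow_succ, pow_add] at hm2
    rw [Nat.add_sub_cancel]
    linarith [congrArg (k ^ m * ·) hC, congrArg (k * ·) hm]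

theorem Phi_pathGraph (k : ℕ) (hk : 1 ≤ k) :
    Phi (pathGraph 2) k = k.choose 2 ∧
    Phi (pathGraph 3) k = k * k.choose 2 ∧
    ∀ n : ℕ, 4 ≤ n →
      Phi (pathGraph n) k = k.choose 2 * k ^ (n - 2) + k * Phi (pathGraph (n - 2)) k :=
  Phi_pathGraph_general k
end

section
/- For every integer n ≥ 2 and every integer k with n+1 ≤ k ≤ 2n, the number of non-equivalent distinguishing colorings of K_{n,n} using exactly k colors equals C(k,n)·C(n,k−n)/2, i.e., φ_k(K_{n,n}) = C(k,n)·C(n,k−n)/2. -/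
open SimpleGraph

open Finset Function

variable {n k : ℕ}

abbrev KG (n : ℕ) := completeBipartiteGraph (Fin n) (Fin n)

lemma not_adj_iff (v w : Fin n ⊕ Fin n) : ¬ (KG n).Adj v w ↔ v.isLeft = w.isLeft := by
  cases v <;> cases w <;> simp

lemma aut_side (α : KG n ≃g KG n) (v w : Fin n ⊕ Fin n) :
    ((α v).isLeft = (α w).isLeft) ↔ (v.isLeft = w.isLeft) := by
  rw [← not_adj_iff, ← not_adj_iff, α.map_adj_iff]

lemma aut_dichotomy (hn : 0 < n) (α : KG n ≃g KG n) :
    (∀ v, (α v).isLeft = v.isLeft) ∨ (∀ v, (α v).isLeft = !v.isLeft) := by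
  cases h : (α (Sum.inl ⟨0, hn⟩)).isLeft
  · right
    intro v
    have h2 := aut_side α v (Sum.inl ⟨0, hn⟩)
    rw [h] at h2
    simp only [Sum.isLeft_inl] at h2
    revert h2; cases (α v).isLeft <;> cases v.isLeft <;> simp
  · left
    intro v
    have h2 := aut_side α v (Sum.inl ⟨0, hn⟩)
    rw [h] at h2
    simp only [Sum.isLeft_inl] at h2
    revert h2; cases (α v).isLeft <;> cases v.isLeft <;> simp

def sumAut (π ρ : Equiv.Perm (Fin n)) : KG n ≃g KG n where
  toEquiv := Equiv.sumCongr π ρ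
  map_rel_iff' := by rintro (i | i) (j | j) <;> simp

def swapAut (π ρ : Equiv.Perm (Fin n)) : KG n ≃g KG n where
  toEquiv := (Equiv.sumCongr π ρ).trans (Equiv.sumComm (Fin n) (Fin n))
  map_rel_iff' := by rintro (i | i) (j | j) <;> simp

def Aimg (c : Fin n ⊕ Fin n → Fin k) : Finset (Fin k) :=
  Finset.image (fun i => c (Sum.inl i)) Finset.univ

def Bimg (c : Fin n ⊕ Fin n → Fin k) : Finset (Fin k) :=
  Finset.image (fun i => c (Sum.inr i)) Finset.univ

lemma mem_Aimg {c : Fin n ⊕ Fin n → Fin k} {x : Fin k} :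
    x ∈ Aimg c ↔ ∃ i, c (Sum.inl i) = x := by simp [Aimg]

lemma mem_Bimg {c : Fin n ⊕ Fin n → Fin k} {x : Fin k} :
    x ∈ Bimg c ↔ ∃ i, c (Sum.inr i) = x := by simp [Bimg]

lemma symm_pres {α : KG n ≃g KG n} (h : ∀ v, (α v).isLeft = v.isLeft) :
    ∀ v, (α.symm v).isLeft = v.isLeft := by
  intro v
  have := h (α.symm v)
  rw [RelIso.apply_symm_apply] at this
  exact this.symm

lemma symm_swap {α : KG n ≃g KG n} (h : ∀ v, (α v).isLeft = !v.isLeft) :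
    ∀ v, (α.symm v).isLeft = !v.isLeft := by
  intro v
  have := h (α.symm v)
  rw [RelIso.apply_symm_apply] at this
  revert this; cases v.isLeft <;> cases (α.symm v).isLeft <;> simp

lemma hc_symm {c₁ c₂ : Fin n ⊕ Fin n → Fin k} {α : KG n ≃g KG n}
    (hc : ∀ v, c₁ v = c₂ (α v)) : ∀ v, c₂ v = c₁ (α.symm v) := by
  intro v
  rw [hc (α.symm v), RelIso.apply_symm_apply]

lemma subAA {c₁ c₂ : Fin n ⊕ Fin n → Fin k} {α : KG n ≃g KG n}
    (hc : ∀ v, c₁ v = c₂ (α v)) (h : ∀ v, (α v).isLeft = v.isLeft) :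
    Aimg c₁ ⊆ Aimg c₂ := by
  intro x hx
  obtain ⟨i, hi⟩ := mem_Aimg.mp hx
  have hl := h (Sum.inl i)
  simp only [Sum.isLeft_inl] at hl
  obtain ⟨j, hj⟩ := Sum.isLeft_iff.mp hl
  exact mem_Aimg.mpr ⟨j, by rw [← hj, ← hc, hi]⟩

lemma subBB {c₁ c₂ : Fin n ⊕ Fin n → Fin k} {α : KG n ≃g KG n}
    (hc : ∀ v, c₁ v = c₂ (α v)) (h : ∀ v, (α v).isLeft = v.isLeft) :
    Bimg c₁ ⊆ Bimg c₂ := by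
  intro x hx
  obtain ⟨i, hi⟩ := mem_Bimg.mp hx
  have hl := h (Sum.inr i)
  simp only [Sum.isLeft_inr] at hl
  rcases hv : α (Sum.inr i) with j | j
  · rw [hv] at hl; simp at hl
  · exact mem_Bimg.mpr ⟨j, by rw [← hv, ← hc, hi]⟩

lemma subAB {c₁ c₂ : Fin n ⊕ Fin n → Fin k} {α : KG n ≃g KG n}
    (hc : ∀ v, c₁ v = c₂ (α v)) (h : ∀ v, (α v).isLeft = !v.isLeft) :
    Aimg c₁ ⊆ Bimg c₂ := by
  intro x hx
  obtain ⟨i, hi⟩ := mem_Aimg.mp hx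
  have hl := h (Sum.inl i)
  simp only [Sum.isLeft_inl] at hl
  rcases hv : α (Sum.inl i) with j | j
  · rw [hv] at hl; simp at hl
  · exact mem_Bimg.mpr ⟨j, by rw [← hv, ← hc, hi]⟩

lemma subBA {c₁ c₂ : Fin n ⊕ Fin n → Fin k} {α : KG n ≃g KG n}
    (hc : ∀ v, c₁ v = c₂ (α v)) (h : ∀ v, (α v).isLeft = !v.isLeft) :
    Bimg c₁ ⊆ Aimg c₂ := by
  intro x hx
  obtain ⟨i, hi⟩ := mem_Bimg.mp hx
  have hl := h (Sum.inr i)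
  simp only [Sum.isLeft_inr] at hl
  obtain ⟨j, hj⟩ := Sum.isLeft_iff.mp hl
  exact mem_Aimg.mpr ⟨j, by rw [← hj, ← hc, hi]⟩

lemma img_eq_pres {c₁ c₂ : Fin n ⊕ Fin n → Fin k} {α : KG n ≃g KG n}
    (hc : ∀ v, c₁ v = c₂ (α v)) (h : ∀ v, (α v).isLeft = v.isLeft) :
    Aimg c₁ = Aimg c₂ ∧ Bimg c₁ = Bimg c₂ :=
  ⟨subset_antisymm (subAA hc h) (subAA (hc_symm hc) (symm_pres h)),
   subset_antisymm (subBB hc h) (subBB (hc_symm hc) (symm_pres h))⟩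

lemma img_eq_swap {c₁ c₂ : Fin n ⊕ Fin n → Fin k} {α : KG n ≃g KG n}
    (hc : ∀ v, c₁ v = c₂ (α v)) (h : ∀ v, (α v).isLeft = !v.isLeft) :
    Aimg c₁ = Bimg c₂ ∧ Bimg c₁ = Aimg c₂ :=
  ⟨subset_antisymm (subAB hc h) (subBA (hc_symm hc) (symm_swap h)),
   subset_antisymm (subBA hc h) (subAB (hc_symm hc) (symm_swap h))⟩

lemma sumAut_inl (π ρ : Equiv.Perm (Fin n)) (i : Fin n) :
    (sumAut π ρ) (Sum.inl i) = Sum.inl (π i) := rfl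

lemma sumAut_inr (π ρ : Equiv.Perm (Fin n)) (i : Fin n) :
    (sumAut π ρ) (Sum.inr i) = Sum.inr (ρ i) := rfl

lemma swapAut_inl (π ρ : Equiv.Perm (Fin n)) (i : Fin n) :
    (swapAut π ρ) (Sum.inl i) = Sum.inr (π i) := rfl

lemma swapAut_inr (π ρ : Equiv.Perm (Fin n)) (i : Fin n) :
    (swapAut π ρ) (Sum.inr i) = Sum.inl (ρ i) := rfl

lemma dist_inj {c : Fin n ⊕ Fin n → Fin k} (hd : IsDistinguishing (KG n) c) :
    Injective (fun i => c (Sum.inl i)) ∧ Injective (fun i => c (Sum.inr i)) := by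
  constructor
  · intro i j hij
    by_contra hne
    have hcol : ∀ v, c ((sumAut (Equiv.swap i j) 1) v) = c v := by
      rintro (m | m)
      · rw [sumAut_inl]
        rcases Equiv.swap_apply_def i j m with _
        by_cases hmi : m = i
        · rw [hmi, Equiv.swap_apply_left]; exact hij.symm
        · by_cases hmj : m = j
          · rw [hmj, Equiv.swap_apply_right]; exact hij
          · rw [Equiv.swap_apply_of_ne_of_ne hmi hmj]
      · rw [sumAut_inr]; rfl
    have := hd _ hcol (Sum.inl i)
    rw [sumAut_inl, Equiv.swap_apply_left] at this
    exact hne (Sum.inl_injective this).symm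
  · intro i j hij
    by_contra hne
    have hcol : ∀ v, c ((sumAut 1 (Equiv.swap i j)) v) = c v := by
      rintro (m | m)
      · rw [sumAut_inl]; rfl
      · rw [sumAut_inr]
        by_cases hmi : m = i
        · rw [hmi, Equiv.swap_apply_left]; exact hij.symm
        · by_cases hmj : m = j
          · rw [hmj, Equiv.swap_apply_right]; exact hij
          · rw [Equiv.swap_apply_of_ne_of_ne hmi hmj]
    have := hd _ hcol (Sum.inr i)
    rw [sumAut_inr, Equiv.swap_apply_left] at this
    exact hne (Sum.inr_injective this).symm

lemma inj_dist (hn : 0 < n) {c : Fin n ⊕ Fin n → Fin k}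
    (hf : Injective (fun i => c (Sum.inl i))) (hg : Injective (fun i => c (Sum.inr i)))
    (hab : Aimg c ≠ Bimg c) : IsDistinguishing (KG n) c := by
  intro α hcol
  have hc' : ∀ v, c v = c (α v) := fun v => (hcol v).symm
  rcases aut_dichotomy hn α with h | h
  · rintro (i | i)
    · have hl := h (Sum.inl i)
      simp only [Sum.isLeft_inl] at hl
      obtain ⟨j, hj⟩ := Sum.isLeft_iff.mp hl
      rw [hj]
      have : c (Sum.inl j) = c (Sum.inl i) := by rw [← hj]; exact hcol _
      rw [hf this]
    · have hl := h (Sum.inr i)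
      simp only [Sum.isLeft_inr] at hl
      rcases hv : α (Sum.inr i) with j | j
      · rw [hv] at hl; simp at hl
      · have : c (Sum.inr j) = c (Sum.inr i) := by rw [← hv]; exact hcol _
        rw [hg this]
  · exact absurd (img_eq_swap hc' h).1 hab

lemma card_Aimg {c : Fin n ⊕ Fin n → Fin k}
    (hf : Injective (fun i => c (Sum.inl i))) : (Aimg c).card = n := by
  rw [Aimg, Finset.card_image_of_injective _ hf, Finset.card_univ, Fintype.card_fin]

lemma card_Bimg {c : Fin n ⊕ Fin n → Fin k}
    (hg : Injective (fun i => c (Sum.inr i))) : (Bimg c).card = n := by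
  rw [Bimg, Finset.card_image_of_injective _ hg, Finset.card_univ, Fintype.card_fin]

lemma surj_iff_union {c : Fin n ⊕ Fin n → Fin k} :
    Surjective c ↔ Aimg c ∪ Bimg c = Finset.univ := by
  constructor
  · intro hs
    apply Finset.eq_univ_of_forall
    intro x
    obtain ⟨v, hv⟩ := hs x
    rcases v with i | i
    · exact Finset.mem_union_left _ (mem_Aimg.mpr ⟨i, hv⟩)
    · exact Finset.mem_union_right _ (mem_Bimg.mpr ⟨i, hv⟩)
  · intro hu x
    have : x ∈ Aimg c ∪ Bimg c := hu ▸ Finset.mem_univ x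
    rcases Finset.mem_union.mp this with hx | hx
    · obtain ⟨i, hi⟩ := mem_Aimg.mp hx; exact ⟨Sum.inl i, hi⟩
    · obtain ⟨i, hi⟩ := mem_Bimg.mp hx; exact ⟨Sum.inr i, hi⟩

lemma AB_ne (hk1 : n + 1 ≤ k) {c : Fin n ⊕ Fin n → Fin k}
    (hf : Injective (fun i => c (Sum.inl i)))
    (hu : Aimg c ∪ Bimg c = Finset.univ) : Aimg c ≠ Bimg c := by
  intro h
  have h1 : (Aimg c).card = n := card_Aimg hf
  have h2 : (Aimg c ∪ Bimg c).card = k := by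
    rw [hu, Finset.card_univ, Fintype.card_fin]
  rw [← h, Finset.union_self, h1] at h2
  omega

lemma charac (hn : 0 < n) (hk1 : n + 1 ≤ k) (c : Fin n ⊕ Fin n → Fin k) :
    (IsDistinguishing (KG n) c ∧ Surjective c) ↔
      (Injective (fun i => c (Sum.inl i)) ∧ Injective (fun i => c (Sum.inr i)) ∧
        Aimg c ∪ Bimg c = Finset.univ) := by
  constructor
  · rintro ⟨hd, hs⟩
    obtain ⟨hf, hg⟩ := dist_inj hd
    exact ⟨hf, hg, surj_iff_union.mp hs⟩
  · rintro ⟨hf, hg, hu⟩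
    exact ⟨inj_dist hn hf hg (AB_ne hk1 hf hu), surj_iff_union.mpr hu⟩

def Pcond (n k : ℕ) (p : Sym2 (Finset (Fin k))) : Prop :=
  ∃ A B : Finset (Fin k), p = s(A, B) ∧ A.card = n ∧ B.card = n ∧ A ∪ B = Finset.univ

lemma exists_perm {f₁ f₂ : Fin n → Fin k} (h₁ : Injective f₁) (h₂ : Injective f₂)
    (h : Finset.image f₁ Finset.univ = Finset.image f₂ Finset.univ) :
    ∃ π : Equiv.Perm (Fin n), ∀ i, f₁ i = f₂ (π i) := by
  have hmem : ∀ i, ∃ j, f₂ j = f₁ i := by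
    intro i
    have : f₁ i ∈ Finset.image f₂ Finset.univ :=
      h ▸ Finset.mem_image_of_mem f₁ (Finset.mem_univ i)
    simpa using this
  choose g hg using hmem
  have hginj : Injective g := fun i j hij => h₁ (by rw [← hg i, ← hg j, hij])
  exact ⟨Equiv.ofBijective g (Finite.injective_iff_bijective.mp hginj),
    fun i => ((hg i).symm.trans (by rw [Equiv.ofBijective_apply]))⟩

lemma rel_of_img_eq {c₁ c₂ : Fin n ⊕ Fin n → Fin k}
    (h₁f : Injective (fun i => c₁ (Sum.inl i))) (h₁g : Injective (fun i => c₁ (Sum.inr i)))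
    (h₂f : Injective (fun i => c₂ (Sum.inl i))) (h₂g : Injective (fun i => c₂ (Sum.inr i)))
    (h : s(Aimg c₁, Bimg c₁) = s(Aimg c₂, Bimg c₂)) :
    ∃ α : KG n ≃g KG n, ∀ v, c₁ v = c₂ (α v) := by
  rcases Sym2.eq_iff.mp h with ⟨hA, hB⟩ | ⟨hA, hB⟩
  · obtain ⟨π, hπ⟩ := exists_perm h₁f h₂f hA
    obtain ⟨ρ, hρ⟩ := exists_perm h₁g h₂g hB
    refine ⟨sumAut π ρ, ?_⟩
    rintro (i | i)
    · rw [sumAut_inl]; exact hπ i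
    · rw [sumAut_inr]; exact hρ i
  · obtain ⟨π, hπ⟩ := exists_perm h₁f h₂g hA
    obtain ⟨ρ, hρ⟩ := exists_perm h₁g h₂f hB
    refine ⟨swapAut π ρ, ?_⟩
    rintro (i | i)
    · rw [swapAut_inl]; exact hπ i
    · rw [swapAut_inr]; exact hρ i

lemma exists_coloring {A B : Finset (Fin k)} (hA : A.card = n) (hB : B.card = n)
    (hU : A ∪ B = Finset.univ) :
    ∃ c : Fin n ⊕ Fin n → Fin k,
      Injective (fun i => c (Sum.inl i)) ∧ Injective (fun i => c (Sum.inr i)) ∧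
      Aimg c = A ∧ Bimg c = B := by
  let eA := Finset.equivFinOfCardEq hA
  let eB := Finset.equivFinOfCardEq hB
  refine ⟨Sum.elim (fun i => (eA.symm i : Fin k)) (fun i => (eB.symm i : Fin k)), ?_, ?_, ?_, ?_⟩
  · exact fun i j hij => eA.symm.injective (Subtype.coe_injective hij)
  · exact fun i j hij => eB.symm.injective (Subtype.coe_injective hij)
  · ext x
    simp only [mem_Aimg, Sum.elim_inl]
    constructor
    · rintro ⟨i, rfl⟩; exact (eA.symm i).2
    · intro hx; exact ⟨eA ⟨x, hx⟩, by simp⟩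
  · ext x
    simp only [mem_Bimg, Sum.elim_inr]
    constructor
    · rintro ⟨i, rfl⟩; exact (eB.symm i).2
    · intro hx; exact ⟨eB ⟨x, hx⟩, by simp⟩

open Classical in
lemma count_pairs (hk1 : n + 1 ≤ k) :
    2 * Nat.card {p : Sym2 (Finset (Fin k)) // Pcond n k p} =
      k.choose n * n.choose (k - n) := by
  classical
  set Q : Finset (Fin k) × Finset (Fin k) → Prop :=
    fun z => z.1.card = n ∧ z.2.card = n ∧ z.1 ∪ z.2 = Finset.univ with hQdef
  set SQ : Finset (Finset (Fin k) × Finset (Fin k)) :=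
    Finset.univ.filter Q with hSQdef
  have hcard1 : Nat.card {p : Sym2 (Finset (Fin k)) // Pcond n k p} =
      (Finset.univ.filter (Pcond n k)).card := by
    rw [Nat.card_eq_fintype_card, Fintype.card_subtype]
  -- filter Pcond = image of SQ under Sym2.mk
  have himg : Finset.univ.filter (Pcond n k) = SQ.image (Function.uncurry Sym2.mk) := by
    ext p
    simp only [Finset.mem_filter, Finset.mem_univ, true_and, Finset.mem_image, hSQdef, hQdef]
    constructor
    · rintro ⟨A, B, rfl, hA, hB, hU⟩
      exact ⟨(A, B), by simp [hA, hB, hU], rfl⟩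
    · rintro ⟨⟨A, B⟩, hz, rfl⟩
      simp only [Finset.mem_filter, Finset.mem_univ, true_and] at hz
      exact ⟨A, B, rfl, hz.1, hz.2.1, hz.2.2⟩
  -- each fiber has exactly two elements
  have hfiber : ∀ p ∈ SQ.image (Function.uncurry Sym2.mk),
      (SQ.filter (fun z => (Function.uncurry Sym2.mk) z = p)).card = 2 := by
    rintro p hp
    simp only [Finset.mem_image] at hp
    obtain ⟨⟨A, B⟩, hzm, rfl⟩ := hp
    simp only [hSQdef, Finset.mem_filter, Finset.mem_univ, true_and, hQdef] at hzm
    obtain ⟨hA, hB, hU⟩ := hzm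
    have hABne : A ≠ B := by
      intro hEq
      have : (A ∪ B).card = k := by rw [hU, Finset.card_univ, Fintype.card_fin]
      rw [hEq, Finset.union_self, hB] at this
      omega
    have : SQ.filter (fun z => (Function.uncurry Sym2.mk) z = (Function.uncurry Sym2.mk) (A, B)) = {(A, B), (B, A)} := by
      ext ⟨C, D⟩
      simp only [Finset.mem_filter, Finset.mem_univ, true_and, Finset.mem_insert,
        Finset.mem_singleton, hSQdef, hQdef, Sym2.mk_eq_mk_iff, Function.uncurry_apply_pair, Sym2.eq_iff, Prod.swap_prod_mk,
        Prod.mk.injEq]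
      constructor
      · rintro ⟨-, (⟨rfl, rfl⟩ | ⟨rfl, rfl⟩)⟩
        · exact Or.inl ⟨rfl, rfl⟩
        · exact Or.inr ⟨rfl, rfl⟩
      · rintro (⟨rfl, rfl⟩ | ⟨rfl, rfl⟩)
        · exact ⟨⟨hA, hB, hU⟩, Or.inl ⟨rfl, rfl⟩⟩
        · exact ⟨⟨hB, hA, by rw [Finset.union_comm]; exact hU⟩, Or.inr ⟨rfl, rfl⟩⟩
    rw [this, Finset.card_pair]
    intro hEq
    exact hABne (congrArg Prod.fst hEq)
  have h2 : SQ.card = 2 * (SQ.image (Function.uncurry Sym2.mk)).card := by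
    rw [Finset.card_eq_sum_card_image (Function.uncurry Sym2.mk) SQ, Finset.sum_congr rfl hfiber,
      Finset.sum_const, smul_eq_mul, mul_comm]
  -- count SQ
  have h3 : SQ.card = k.choose n * n.choose (k - n) := by
    have hfib : ∀ z ∈ SQ, z.1 ∈ Finset.univ.filter (fun A : Finset (Fin k) => A.card = n) := by
      rintro ⟨A, B⟩ hz
      simp only [hSQdef, hQdef, Finset.mem_filter, Finset.mem_univ, true_and] at hz ⊢
      exact hz.1
    rw [Finset.card_eq_sum_card_fiberwise hfib]
    have hstep : ∀ A ∈ Finset.univ.filter (fun A : Finset (Fin k) => A.card = n),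
        (SQ.filter (fun z => z.1 = A)).card = n.choose (k - n) := by
      intro A hA
      simp only [Finset.mem_filter, Finset.mem_univ, true_and] at hA
      have hbij : (SQ.filter (fun z => z.1 = A)).card = (A.powersetCard (k - n)).card := by
        apply Finset.card_bij (fun z _ => z.2ᶜ)
        · rintro ⟨C, B⟩ hz
          simp only [hSQdef, hQdef, Finset.mem_filter, Finset.mem_univ, true_and] at hz
          obtain ⟨⟨hC, hB, hU⟩, rfl⟩ := hz
          rw [Finset.mem_powersetCard]
          constructor
          · intro x hx
            rw [Finset.mem_compl] at hx
            have : x ∈ C ∪ B := hU ▸ Finset.mem_univ x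
            rcases Finset.mem_union.mp this with h | h
            · exact h
            · exact absurd h hx
          · rw [Finset.card_compl, hB, Fintype.card_fin]
        · rintro ⟨C₁, B₁⟩ h₁ ⟨C₂, B₂⟩ h₂ hEq
          simp only [Finset.mem_filter] at h₁ h₂
          have hB : B₁ = B₂ := compl_injective hEq
          rw [Prod.mk.injEq]
          exact ⟨h₁.2.trans h₂.2.symm, hB⟩
        · intro C hC
          rw [Finset.mem_powersetCard] at hC
          refine ⟨(A, Cᶜ), ?_, by simp⟩
          simp only [hSQdef, hQdef, Finset.mem_filter, Finset.mem_univ, true_and]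
          refine ⟨⟨hA, ?_, ?_⟩, trivial⟩
          · rw [Finset.card_compl, hC.2, Fintype.card_fin]
            omega
          · apply Finset.eq_univ_of_forall
            intro x
            rw [Finset.mem_union, Finset.mem_compl]
            by_cases hx : x ∈ C
            · exact Or.inl (hC.1 hx)
            · exact Or.inr hx
      rw [hbij, Finset.card_powersetCard, hA]
    rw [Finset.sum_congr rfl hstep, Finset.sum_const, smul_eq_mul]
    congr 1
    have : Finset.univ.filter (fun A : Finset (Fin k) => A.card = n) =
        Finset.powersetCard n Finset.univ := by
      ext C
      simp [Finset.mem_powersetCard]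
    rw [this, Finset.card_powersetCard, Finset.card_univ, Fintype.card_fin]
  rw [hcard1, himg, ← h2, h3]

theorem phi_completeBipartite (n k : ℕ) (hn : 2 ≤ n) (hk1 : n + 1 ≤ k) (hk2 : k ≤ 2 * n) :
    phi (completeBipartiteGraph (Fin n) (Fin n)) k =
      k.choose n * n.choose (k - n) / 2 := by
  have hn0 : 0 < n := by omega
  have key : 2 * phi (completeBipartiteGraph (Fin n) (Fin n)) k =
      k.choose n * n.choose (k - n) := by
    rw [← count_pairs (n := n) (k := k) hk1]
    congr 1
    apply Nat.card_congr
    -- build the bijection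
    have hF0 : ∀ c : {c : Fin n ⊕ Fin n → Fin k //
        IsDistinguishing (KG n) c ∧ Surjective c}, Pcond n k s(Aimg c.1, Bimg c.1) := by
      intro c
      obtain ⟨hf, hg, hu⟩ := (charac hn0 hk1 c.1).mp c.2
      exact ⟨Aimg c.1, Bimg c.1, rfl, card_Aimg hf, card_Bimg hg, hu⟩
    let F0 : {c : Fin n ⊕ Fin n → Fin k // IsDistinguishing (KG n) c ∧ Surjective c} →
        {p : Sym2 (Finset (Fin k)) // Pcond n k p} := fun c => ⟨s(Aimg c.1, Bimg c.1), hF0 c⟩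
    have hresp : ∀ c₁ c₂, (∃ α : KG n ≃g KG n, ∀ v, c₁.1 v = c₂.1 (α v)) → F0 c₁ = F0 c₂ := by
      rintro c₁ c₂ ⟨α, hc⟩
      apply Subtype.ext
      rcases aut_dichotomy hn0 α with h | h
      · obtain ⟨hA, hB⟩ := img_eq_pres hc h
        simp only [F0]
        rw [hA, hB]
      · obtain ⟨hA, hB⟩ := img_eq_swap hc h
        simp only [F0]
        rw [hA, hB, Sym2.eq_swap]
    let F := Quot.lift F0 hresp
    have hbij : Function.Bijective F := by
      constructor
      · intro q₁ q₂
        induction q₁ using Quot.ind with | _ c₁ =>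
        induction q₂ using Quot.ind with | _ c₂ =>
        intro h
        have hs : s(Aimg c₁.1, Bimg c₁.1) = s(Aimg c₂.1, Bimg c₂.1) := by
          have h2 := congrArg Subtype.val h
          simpa only [F, F0] using h2
        obtain ⟨h₁f, h₁g, -⟩ := (charac hn0 hk1 c₁.1).mp c₁.2
        obtain ⟨h₂f, h₂g, -⟩ := (charac hn0 hk1 c₂.1).mp c₂.2
        exact Quot.sound (rel_of_img_eq h₁f h₁g h₂f h₂g hs)
      · rintro ⟨p, hp⟩
        obtain ⟨A, B, rfl, hA, hB, hU⟩ := hp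
        obtain ⟨c, hf, hg, hAc, hBc⟩ := exists_coloring hA hB hU
        have hc : IsDistinguishing (KG n) c ∧ Surjective c :=
          (charac hn0 hk1 c).mpr ⟨hf, hg, by rw [hAc, hBc]; exact hU⟩
        exact ⟨Quot.mk _ ⟨c, hc⟩, Subtype.ext (by simp only [F, F0]; rw [hAc, hBc])⟩
    exact Equiv.ofBijective F hbij
  omega
end

section
/- Let G be a finite simple graph on n vertices. For every integer k with k ≥ θ(G), the number of non-equivalent distinguishing colorings of G using exactly k colors equals k!·S(n,k)/|Aut(G)|, i.e., φ_k(G) = k!·S(n,k)/|Aut(G)|. -/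
open SimpleGraph

section PhiAux

lemma aux_surj_succ_iff {n K : ℕ} (f : Fin (n+1) → Fin K) :
    Function.Surjective f ↔ Set.range (Fin.tail f) ∪ {f 0} = Set.univ := by
  constructor
  · intro h
    rw [Set.eq_univ_iff_forall]
    intro w
    obtain ⟨i, hi⟩ := h w
    cases i using Fin.cases with
    | zero => exact Or.inr hi.symm
    | succ j => exact Or.inl ⟨j, hi⟩
  · intro h w
    have := h ▸ Set.mem_univ w
    rcases this with ⟨j, hj⟩ | hw
    · exact ⟨j.succ, hj⟩
    · exact ⟨0, hw.symm⟩

lemma aux_range_union_iff {K : ℕ} (v : Fin K) {n : ℕ} (g : Fin n → Fin K) :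
    Set.range g ∪ {v} = Set.univ ↔ Function.Surjective g ∨ Set.range g = {v}ᶜ := by
  constructor
  · intro h
    by_cases hv : v ∈ Set.range g
    · left
      rw [← Set.range_eq_univ] at *
      rw [← h]
      simp [Set.union_eq_self_of_subset_right, Set.singleton_subset_iff.mpr hv]
    · right
      ext w
      simp only [Set.mem_compl_iff, Set.mem_singleton_iff]
      constructor
      · rintro hw rfl; exact hv hw
      · intro hw
        rcases h ▸ Set.mem_univ w with h' | h'
        · exact h'
        · exact absurd h' hw
  · rintro (h | h)
    · rw [Set.range_eq_univ.mpr h]; simp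
    · rw [h, Set.compl_union_self]

def auxEquivOne (n K : ℕ) : {f : Fin (n+1) → Fin K // Function.Surjective f} ≃
    Σ _v : Fin K, {g : Fin n → Fin K // Function.Surjective g ∨ Set.range g = {_v}ᶜ} where
  toFun f := ⟨f.1 0, Fin.tail f.1, (aux_range_union_iff _ _).mp ((aux_surj_succ_iff f.1).mp f.2)⟩
  invFun p := ⟨Fin.cons p.1 p.2.1, (aux_surj_succ_iff _).mpr (by
      rw [Fin.tail_cons, Fin.cons_zero]
      exact (aux_range_union_iff _ _).mpr p.2.2)⟩
  left_inv f := Subtype.ext (Fin.cons_self_tail f.1)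
  right_inv p := rfl

noncomputable def auxEquivTwo {α : Type*} (p q : α → Prop) (h : ∀ a, ¬(p a ∧ q a)) :
    {a // p a ∨ q a} ≃ {a // p a} ⊕ {a // q a} := by
  classical
  exact subtypeOrEquiv p q (by
    rw [Pi.disjoint_iff]
    intro a
    rw [Prop.disjoint_iff]
    exact fun hpq => h a hpq)

noncomputable def auxEquivThree {n k : ℕ} (v : Fin (k+1)) :
    {g : Fin n → Fin (k+1) // Set.range g = {v}ᶜ} ≃
      {h : Fin n → Fin k // Function.Surjective h} := by
  have hcard : Fintype.card {x : Fin (k+1) // x ≠ v} = k := by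
    simp [Fintype.card_subtype_compl]
  let e : {x : Fin (k+1) // x ≠ v} ≃ Fin k := Fintype.equivFinOfCardEq hcard
  refine
  { toFun := fun g => ⟨fun i => e ⟨g.1 i, ?_⟩, ?_⟩
    invFun := fun h => ⟨fun i => (e.symm (h.1 i)).1, ?_⟩
    left_inv := ?_
    right_inv := ?_ }
  · have : g.1 i ∈ Set.range g.1 := ⟨i, rfl⟩
    rw [g.2] at this
    exact this
  · intro y
    have hne : ((e.symm y : {x : Fin (k+1) // x ≠ v}) : Fin (k+1)) ≠ v := (e.symm y).2
    have : ((e.symm y : {x : Fin (k+1) // x ≠ v}) : Fin (k+1)) ∈ Set.range g.1 := by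
      rw [g.2]; exact hne
    obtain ⟨i, hi⟩ := this
    refine ⟨i, ?_⟩
    have : (⟨g.1 i, by rw [hi]; exact hne⟩ : {x : Fin (k+1) // x ≠ v}) = e.symm y :=
      Subtype.ext hi
    exact (congrArg e this).trans (e.apply_symm_apply y)
  · ext w
    simp only [Set.mem_range, Set.mem_compl_iff, Set.mem_singleton_iff]
    constructor
    · rintro ⟨i, rfl⟩
      exact (e.symm (h.1 i)).2
    · intro hw
      obtain ⟨i, hi⟩ := h.2 (e ⟨w, hw⟩)
      exact ⟨i, by rw [hi, Equiv.symm_apply_apply]⟩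
  · intro g
    apply Subtype.ext
    funext i
    simp
  · intro h
    apply Subtype.ext
    funext i
    simp
    exact e.apply_symm_apply _

noncomputable def nsurjAux (n k : ℕ) : ℕ :=
  Nat.card {f : Fin n → Fin k // Function.Surjective f}

noncomputable def auxMasterEquiv (n k : ℕ) :
    {f : Fin (n+1) → Fin (k+1) // Function.Surjective f} ≃
    Fin (k+1) × ({g : Fin n → Fin (k+1) // Function.Surjective g} ⊕
      {h : Fin n → Fin k // Function.Surjective h}) :=
  (auxEquivOne n (k+1)).trans <|
    (Equiv.sigmaCongrRight fun v =>
      (auxEquivTwo _ _ (by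
        rintro g ⟨h1, h2⟩
        have : v ∈ Set.range g := h1 v
        rw [h2] at this
        exact this rfl)).trans
        (Equiv.sumCongr (Equiv.refl _) (auxEquivThree v))).trans
      (Equiv.sigmaEquivProd _ _)

lemma nsurjAux_succ_succ (n k : ℕ) :
    nsurjAux (n+1) (k+1) = (k+1) * (nsurjAux n (k+1) + nsurjAux n k) := by
  unfold nsurjAux
  rw [Nat.card_congr (auxMasterEquiv n k), Nat.card_prod, Nat.card_sum]
  simp

lemma nsurjAux_zero_zero : nsurjAux 0 0 = 1 := by
  have : Unique {f : Fin 0 → Fin 0 // Function.Surjective f} :=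
    ⟨⟨⟨finZeroElim, fun x => x.elim0⟩⟩, fun f => Subtype.ext (funext fun i => i.elim0)⟩
  exact Nat.card_unique

lemma nsurjAux_zero_succ (k : ℕ) : nsurjAux 0 (k+1) = 0 := by
  have : IsEmpty {f : Fin 0 → Fin (k+1) // Function.Surjective f} :=
    ⟨fun f => by obtain ⟨i, -⟩ := f.2 0; exact i.elim0⟩
  exact Nat.card_of_isEmpty

lemma nsurjAux_succ_zero (n : ℕ) : nsurjAux (n+1) 0 = 0 := by
  have : IsEmpty {f : Fin (n+1) → Fin 0 // Function.Surjective f} :=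
    ⟨fun f => (f.1 0).elim0⟩
  exact Nat.card_of_isEmpty

lemma nsurjAux_eq (n : ℕ) : ∀ k, nsurjAux n k = k.factorial * stirling2 n k := by
  induction n with
  | zero =>
    rintro (_ | k)
    · simpa [stirling2] using nsurjAux_zero_zero
    · simp [stirling2, nsurjAux_zero_succ]
  | succ n ih =>
    rintro (_ | k)
    · simp [stirling2, nsurjAux_succ_zero]
    · rw [nsurjAux_succ_succ, ih, ih, stirling2]
      rw [Nat.factorial_succ]
      ring

lemma theta_spec_aux {V : Type*} [Fintype V] (G : SimpleGraph V) {k : ℕ} (hk : theta G ≤ k)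
    (c : V → Fin k) (hc : Function.Surjective c) : IsDistinguishing G c := by
  have hmem : (Fintype.card V + 1) ∈
      {t | ∀ k, t ≤ k → ∀ c : V → Fin k, Function.Surjective c → IsDistinguishing G c} := by
    intro k' hk' c' hc'
    have := Fintype.card_le_of_surjective c' hc'
    simp only [Fintype.card_fin] at this
    omega
  exact Nat.sInf_mem ⟨_, hmem⟩ k hk c hc

instance autFiniteAux {V : Type*} [Fintype V] (G : SimpleGraph V) : Finite (G ≃g G) :=
  Finite.of_injective (fun a => a.toEquiv)
    (fun a b h => by ext v; exact congrArg (fun e => e.toFun v) h)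

lemma aut_eq_one_aux {V : Type*} {G : SimpleGraph V} {α : G ≃g G} (h : ∀ v, α v = v) :
    α = 1 := by
  ext v
  exact h v

end PhiAux

theorem phi_of_ge_theta (V : Type*) [Fintype V] (G : SimpleGraph V) (k : ℕ)
    (hk : theta G ≤ k) :
    phi G k = k.factorial * stirling2 (Fintype.card V) k / Nat.card (G ≃g G) := by
  classical
  let X := {c : V → Fin k // IsDistinguishing G c ∧ Function.Surjective c}
  letI : SMul (G ≃g G) X := ⟨fun a c =>
    ⟨c.1 ∘ ⇑a⁻¹, theta_spec_aux G hk _ (c.2.2.comp a⁻¹.toEquiv.surjective),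
      c.2.2.comp a⁻¹.toEquiv.surjective⟩⟩
  letI : MulAction (G ≃g G) X :=
    { one_smul := fun c => Subtype.ext (funext fun v => by
        show c.1 ((1 : G ≃g G)⁻¹ v) = c.1 v
        rw [inv_one]; rfl)
      mul_smul := fun a b c => Subtype.ext (funext fun v => by
        show c.1 ((a * b)⁻¹ v) = c.1 (b⁻¹ (a⁻¹ v))
        rw [mul_inv_rev]; rfl) }
  have hstab : ∀ c : X, MulAction.stabilizer (G ≃g G) c = ⊥ := by
    intro c
    ext g
    simp only [Subgroup.mem_bot, MulAction.mem_stabilizer_iff]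
    constructor
    · intro hgc
      have hv : ∀ v, c.1 (g⁻¹ v) = c.1 v := fun v => congrFun (congrArg Subtype.val hgc) v
      have hfix : ∀ v, g⁻¹ v = v := c.2.1 g⁻¹ hv
      have h1 : ∀ v, g⁻¹ (g v) = v := fun v => by
        rw [show g⁻¹ (g v) = (g⁻¹ * g) v from rfl, inv_mul_cancel]; rfl
      apply aut_eq_one_aux
      intro v
      exact (hfix (g v)).symm.trans (h1 v)
    · rintro rfl
      exact one_smul _ c
  have e1 : Quot (fun c₁ c₂ : X => ∃ α : G ≃g G, ∀ v, c₁.1 v = c₂.1 (α v)) ≃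
      MulAction.orbitRel.Quotient (G ≃g G) X := by
    refine Quot.congrRight fun c₁ c₂ => ?_
    show _ ↔ c₁ ∈ MulAction.orbit (G ≃g G) c₂
    constructor
    · rintro ⟨α, hα⟩
      refine ⟨α⁻¹, Subtype.ext (funext fun v => ?_)⟩
      show c₂.1 ((α⁻¹)⁻¹ v) = c₁.1 v
      rw [inv_inv]
      exact (hα v).symm
    · rintro ⟨g, hg⟩
      refine ⟨g⁻¹, fun v => ?_⟩
      rw [← hg]
      rfl
  let Ω := MulAction.orbitRel.Quotient (G ≃g G) X
  have e2 : X ≃ Σ ω : Ω, (G ≃g G) ⧸ MulAction.stabilizer (G ≃g G) ω.out :=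
    MulAction.selfEquivSigmaOrbitsQuotientStabilizer (G ≃g G) X
  have e2b : ∀ ω : Ω, ((G ≃g G) ⧸ MulAction.stabilizer (G ≃g G) ω.out) ≃ (G ≃g G) :=
    fun ω => (Subgroup.quotientEquivOfEq (hstab ω.out)).trans
      QuotientGroup.quotientBot.toEquiv
  have e3 : X ≃ Ω × (G ≃g G) :=
    e2.trans ((Equiv.sigmaCongrRight e2b).trans (Equiv.sigmaEquivProd _ _))
  have e4 : X ≃ {c : V → Fin k // Function.Surjective c} :=
    Equiv.subtypeEquivRight (fun c => ⟨And.right, fun h => ⟨theta_spec_aux G hk c h, h⟩⟩)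
  let eV := Fintype.equivFin V
  have e5 : {c : V → Fin k // Function.Surjective c} ≃
      {f : Fin (Fintype.card V) → Fin k // Function.Surjective f} :=
    { toFun := fun c => ⟨c.1 ∘ ⇑eV.symm, c.2.comp eV.symm.surjective⟩
      invFun := fun f => ⟨f.1 ∘ ⇑eV, f.2.comp eV.surjective⟩
      left_inv := fun c => Subtype.ext (funext fun v => by simp)
      right_inv := fun f => Subtype.ext (funext fun i => by simp) }
  haveI : Nonempty (G ≃g G) := ⟨1⟩
  have hA : 0 < Nat.card (G ≃g G) := Nat.card_pos
  have hcardX : Nat.card X = Nat.card Ω * Nat.card (G ≃g G) := by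
    rw [Nat.card_congr e3, Nat.card_prod]
  have hXval : Nat.card X = k.factorial * stirling2 (Fintype.card V) k := by
    rw [Nat.card_congr (e4.trans e5)]
    exact nsurjAux_eq _ _
  have hphi : phi G k = Nat.card Ω := by
    unfold phi
    exact Nat.card_congr e1
  have hkey : k.factorial * stirling2 (Fintype.card V) k = Nat.card Ω * Nat.card (G ≃g G) :=
    hXval ▸ hcardX
  rw [hphi, hkey, Nat.mul_div_cancel _ hA]
end

section
/- For every integer n ≥ 4, the number of non-equivalent distinguishing colorings of the path P_n using exactly n − 1 colors equals (n−1)·n!/4, i.e., φ_{n−1}(P_n) = (n−1)·n!/4. -/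
open SimpleGraph

/-!
The automorphisms of the path `P_n` are the identity and the reversal `v ↦ n - 1 - v`. A
reversal-invariant colouring is determined by its values on the first `⌈n/2⌉` vertices, so for
`n ≥ 4` no colouring onto `n - 1` colours is reversal-invariant: every such colouring is
distinguishing, and its equivalence class is exactly `{c, c ∘ rev}`, of size two. A surjection
`Fin n → Fin (n - 1)` is given by the one pair `a < b` of vertices sharing a colour together with a
bijection `Fin n \ {b} ≃ Fin (n - 1)`, so there are `C(n, 2) (n - 1)! = (n - 1) n! / 2` of them,
twice the number of classes.
-/

open Function

theorem Function.Involutive.two_mul_card_quot_eq_card {S : Type*} [Finite S] {t : S → S}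
    (ht : Involutive t) (hfree : ∀ x, t x ≠ x) {r : S → S → Prop}
    (hr : ∀ x y, r x y ↔ x = y ∨ x = t y) :
    2 * Nat.card (Quot r) = Nat.card S := by
  have : Fintype (Quot r) := Fintype.ofFinite _
  have hequiv : Equivalence r := by
    refine ⟨fun x => (hr x x).mpr (Or.inl rfl), fun {x y} hxy => ?_, fun {x y z} hxy hyz => ?_⟩
    · rw [hr] at hxy ⊢
      rcases hxy with rfl | rfl
      exacts [Or.inl rfl, Or.inr (ht y).symm]
    · rw [hr] at hxy hyz ⊢
      rcases hxy with rfl | rfl <;> rcases hyz with rfl | rfl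
      exacts [Or.inl rfl, Or.inr rfl, Or.inr rfl, Or.inl (ht z)]
  have card_fiber (q : Quot r) : Nat.card {x // Quot.mk r x = q} = 2 := by
    induction q using Quot.ind with
    | mk x =>
      have hmem (y : S) : Quot.mk r y = Quot.mk r x ↔ y ∈ ({x, t x} : Set S) := by
        rw [Quot.eq, hequiv.eqvGen_iff, hr]
        rfl
      rw [Nat.card_congr (Equiv.subtypeEquivRight hmem), Nat.card_coe_set_eq,
        Set.ncard_pair (hfree x).symm]
  rw [← Nat.card_congr (Equiv.sigmaFiberEquiv (Quot.mk r)), Nat.card_sigma]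
  simp [card_fiber, mul_comm]

namespace Fin

variable {m : ℕ}

theorem eq_or_eq_of_removeNth_injective {β : Type*} {c : Fin (m + 1) → β} {b : Fin (m + 1)}
    (hc : Injective (b.removeNth c)) {x y : Fin (m + 1)} (hxy : x ≠ y) (h : c x = c y) :
    x = b ∨ y = b := by
  by_contra! hne
  obtain ⟨i, rfl⟩ := exists_succAbove_eq hne.1
  obtain ⟨j, rfl⟩ := exists_succAbove_eq hne.2
  exact hxy (congrArg b.succAbove (hc h))

/-- For `p = (a, b)`, the surjection identifying `a` with `b` that is `σ` after deleting `b`. -/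
def mergeSurjection (p : {p : Fin (m + 1) × Fin (m + 1) // p.1 < p.2}) (σ : Equiv.Perm (Fin m)) :
    {c : Fin (m + 1) → Fin m // Surjective c} :=
  ⟨p.1.2.insertNth (σ (p.1.1.castPred (ne_last_of_lt p.2))) σ,
    fun y => ⟨p.1.2.succAbove (σ.symm y), by simp⟩⟩

section mergeSurjection

variable (p : {p : Fin (m + 1) × Fin (m + 1) // p.1 < p.2}) (σ : Equiv.Perm (Fin m))

theorem removeNth_mergeSurjection : p.1.2.removeNth (mergeSurjection p σ).1 = σ :=
  removeNth_insertNth _ _ _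

theorem mergeSurjection_apply_snd :
    (mergeSurjection p σ).1 p.1.2 = σ (p.1.1.castPred (ne_last_of_lt p.2)) :=
  insertNth_apply_same (α := fun _ => Fin m) _ _ _

theorem mergeSurjection_apply_fst :
    (mergeSurjection p σ).1 p.1.1 = (mergeSurjection p σ).1 p.1.2 := by
  rw [mergeSurjection_apply_snd]
  conv_lhs => rw [← succAbove_castPred_of_lt _ _ p.2]
  exact insertNth_apply_succAbove (α := fun _ => Fin m) _ _ _ _

end mergeSurjection

theorem mergeSurjection_injective : Injective (uncurry (mergeSurjection (m := m))) := by
  rintro ⟨p, σ⟩ ⟨p', σ'⟩ h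
  have hc : (mergeSurjection p σ).1 = (mergeSurjection p' σ').1 := congrArg Subtype.val h
  have hb : p.1.2 = p'.1.2 := by
    have h₁ := eq_or_eq_of_removeNth_injective (b := p'.1.2)
      (by rw [hc, removeNth_mergeSurjection]; exact σ'.injective) p.2.ne
      (mergeSurjection_apply_fst p σ)
    have h₂ := eq_or_eq_of_removeNth_injective (b := p.1.2)
      (by rw [← hc, removeNth_mergeSurjection]; exact σ.injective) p'.2.ne
      (mergeSurjection_apply_fst p' σ')
    rcases h₁ with h₁ | h₁
    · rcases h₂ with h₂ | h₂
      · exact absurd (h₁ ▸ h₂ ▸ p'.2) (lt_asymm p.2)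
      · exact h₂.symm
    · exact h₁
  have hσ : σ = σ' := by
    rw [← DFunLike.coe_fn_eq, ← removeNth_mergeSurjection p, hb, hc, removeNth_mergeSurjection]
  subst hσ
  have ha : p.1.1 = p'.1.1 := by
    refine (castPred_inj (hi := ne_last_of_lt p.2) (hj := ne_last_of_lt p'.2)).mp (σ.injective ?_)
    rw [← mergeSurjection_apply_snd, hb, hc, mergeSurjection_apply_snd]
  rw [Subtype.ext (Prod.ext ha hb)]

theorem mergeSurjection_surjective : Surjective (uncurry (mergeSurjection (m := m))) := by
  rintro ⟨c, hc⟩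
  obtain ⟨x, y, hxy, hne⟩ := not_injective_iff.mp fun hinj =>
    by simpa using Fintype.card_le_of_injective c hinj
  wlog hlt : x < y generalizing x y
  · exact this y x hxy.symm hne.symm (lt_of_le_of_ne (not_lt.mp hlt) hne.symm)
  have hmerge : y.removeNth c (x.castPred (ne_last_of_lt hlt)) = c y := by
    rw [removeNth, succAbove_castPred_of_lt _ _ hlt, hxy]
  have hσ : Surjective (y.removeNth c) := fun z => by
    obtain ⟨v, rfl⟩ := hc z
    rcases eq_or_ne v y with rfl | hv
    · exact ⟨_, hmerge⟩
    · obtain ⟨i, rfl⟩ := exists_succAbove_eq hv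
      exact ⟨i, rfl⟩
  refine ⟨(⟨(x, y), hlt⟩, Equiv.ofBijective _ ⟨Finite.injective_iff_surjective.mpr hσ, hσ⟩),
    Subtype.ext ?_⟩
  show y.insertNth (y.removeNth c _) (y.removeNth c) = c
  rw [hmerge]
  exact insertNth_self_removeNth y c

theorem card_surjective_succ (m : ℕ) :
    Nat.card {c : Fin (m + 1) → Fin m // Surjective c} = (m + 1).choose 2 * m.factorial := by
  rw [← Nat.card_eq_of_bijective _ ⟨mergeSurjection_injective, mergeSurjection_surjective⟩,
    Nat.card_prod, Nat.card_perm, Nat.card_fin, Nat.card_eq_fintype_card, Fintype.card_subtype,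
    ← Finset.univ_product_univ, Finset.card_product_filter_lt, Finset.card_univ, Fintype.card_fin]

theorem card_le_of_surjective_of_rev_invariant {n : ℕ} {β : Type*} {c : Fin n → β}
    (hc : Surjective c) (hrev : ∀ v, c v.rev = c v) : Nat.card β ≤ (n + 1) / 2 := by
  refine (Nat.card_le_card_of_surjective (c ∘ castLE (by omega)) fun b => ?_).trans
    (Nat.card_fin _).le
  obtain ⟨v, rfl⟩ := hc b
  by_cases hv : v.val < (n + 1) / 2
  · exact ⟨⟨v, hv⟩, rfl⟩
  · exact ⟨⟨v.rev, by rw [val_rev]; omega⟩, hrev v⟩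

end Fin

namespace SimpleGraph.pathGraph

variable {n : ℕ}

def reverseIso (n : ℕ) : pathGraph n ≃g pathGraph n where
  toEquiv := Fin.revPerm
  map_rel_iff' := by
    intro u v
    simp only [Fin.revPerm_apply, pathGraph_adj, Fin.val_rev]
    omega

@[simp] lemma reverseIso_apply (v : Fin n) : reverseIso n v = v.rev := rfl

lemma adj_zero_iff {v : Fin (n + 1)} : (pathGraph (n + 1)).Adj 0 v ↔ v.val = 1 := by
  simp [pathGraph_adj, eq_comm]

lemma iso_apply_zero_eq_zero_or_eq_last (α : pathGraph (n + 1) ≃g pathGraph (n + 1)) :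
    α 0 = 0 ∨ α 0 = Fin.last n := by
  by_contra! h
  have hpos : (α 0).val ≠ 0 := Fin.val_ne_iff.mpr h.1
  have hlt : (α 0).val ≠ n := fun h' => h.2 (Fin.ext h')
  -- `α 0` has two neighbours but `0` has only one
  have preimage_val_eq_one (u : Fin (n + 1)) (hu : (pathGraph (n + 1)).Adj (α 0) u) :
      (α.symm u).val = 1 := by
    rw [← adj_zero_iff, ← α.symm_apply_apply 0]
    exact α.symm.map_adj_iff.mpr hu
  have hsucc := preimage_val_eq_one ⟨(α 0).val + 1, by omega⟩ (by simp [pathGraph_adj])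
  have hpred := preimage_val_eq_one ⟨(α 0).val - 1, by omega⟩ (by simp [pathGraph_adj]; omega)
  have := α.symm.injective (Fin.ext (hsucc.trans hpred.symm))
  simp only [Fin.mk.injEq] at this
  omega

lemma iso_eq_refl_of_apply_zero_eq_zero (α : pathGraph (n + 1) ≃g pathGraph (n + 1)) (h : α 0 = 0) :
    α = Iso.refl := by
  suffices ∀ k, ∀ v : Fin (n + 1), v.val ≤ k → α v = v from RelIso.ext fun v => this v v le_rfl
  intro k
  induction k with
  | zero =>
    intro v hv
    obtain rfl : v = 0 := Fin.ext (by simpa using hv)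
    exact h
  | succ k ih =>
    intro v hv
    rcases hv.lt_or_eq with hv | hv
    · exact ih v (by omega)
    have hadj : (pathGraph (n + 1)).Adj ⟨k, by omega⟩ (α v) := by
      rw [← ih ⟨k, by omega⟩ le_rfl, α.map_adj_iff, pathGraph_adj, Fin.val_mk]
      omega
    rw [pathGraph_adj] at hadj
    rcases hadj with hsucc | hpred
    · exact Fin.ext (by simp only at hsucc; omega)
    · have hfix : α ⟨k - 1, by omega⟩ = α v :=
        (ih _ (Nat.sub_le k 1)).trans (Fin.ext (by simp only at hpred ⊢; omega))
      have := congrArg Fin.val (α.injective hfix)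
      simp only at this
      omega

theorem iso_eq_refl_or_reverseIso (α : pathGraph n ≃g pathGraph n) :
    α = Iso.refl ∨ α = reverseIso n := by
  cases n with
  | zero => exact Or.inl (RelIso.ext fun v => v.elim0)
  | succ n =>
    rcases iso_apply_zero_eq_zero_or_eq_last α with h | h
    · exact Or.inl (iso_eq_refl_of_apply_zero_eq_zero α h)
    · right
      have hrev := iso_eq_refl_of_apply_zero_eq_zero (α.trans (reverseIso _)) (by simp [h])
      refine RelIso.ext fun v => ?_
      simpa [Fin.rev_eq_iff] using RelIso.ext_iff.mp hrev v

theorem isDistinguishing_of_surjective {k : ℕ} {c : Fin n → Fin k} (hc : Surjective c)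
    (hk : (n + 1) / 2 < k) : IsDistinguishing (pathGraph n) c := by
  intro α hα v
  rcases iso_eq_refl_or_reverseIso α with rfl | rfl
  · rfl
  · have := Fin.card_le_of_surjective_of_rev_invariant hc hα
    rw [Nat.card_fin] at this
    omega

theorem two_mul_phi_eq_card_surjective {k : ℕ} (hk : (n + 1) / 2 < k) :
    2 * phi (pathGraph n) k = Nat.card {c : Fin n → Fin k // Surjective c} := by
  let S := {c : Fin n → Fin k // IsDistinguishing (pathGraph n) c ∧ Surjective c}
  let t (c : S) : S :=
    ⟨c.1 ∘ Fin.rev, isDistinguishing_of_surjective (c.2.2.comp Fin.rev_surjective) hk,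
      c.2.2.comp Fin.rev_surjective⟩
  have ht : Involutive t := fun c => Subtype.ext (funext fun v => by simp [t])
  have hfree (c : S) : t c ≠ c := fun h => by
    have := Fin.card_le_of_surjective_of_rev_invariant c.2.2 (congrFun (congrArg Subtype.val h))
    rw [Nat.card_fin] at this
    omega
  have hr (c₁ c₂ : S) : (∃ α : pathGraph n ≃g pathGraph n, ∀ v, c₁.1 v = c₂.1 (α v)) ↔
      c₁ = c₂ ∨ c₁ = t c₂ := by
    constructor
    · rintro ⟨α, hα⟩
      rcases iso_eq_refl_or_reverseIso α with rfl | rfl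
      exacts [Or.inl (Subtype.ext (funext hα)), Or.inr (Subtype.ext (funext hα))]
    · rintro (rfl | rfl)
      exacts [⟨Iso.refl, fun v => rfl⟩, ⟨reverseIso n, fun v => rfl⟩]
  rw [phi, ht.two_mul_card_quot_eq_card hfree hr]
  exact Nat.card_congr (Equiv.subtypeEquivRight fun c =>
    and_iff_right_of_imp (isDistinguishing_of_surjective · hk))

end SimpleGraph.pathGraph

theorem phi_pathGraph_pred (n : ℕ) (hn : 4 ≤ n) :
    phi (pathGraph n) (n - 1) = (n - 1) * n.factorial / 4 := by
  obtain ⟨m, rfl⟩ : ∃ m, n = m + 1 := ⟨n - 1, by omega⟩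
  have htwice := pathGraph.two_mul_phi_eq_card_surjective (n := m + 1) (k := m) (by omega)
  rw [Fin.card_surjective_succ] at htwice
  have hchoose : (m + 1).choose 2 * 2 = (m + 1) * m := by
    rw [← Nat.add_one_mul_choose_eq, Nat.choose_one_right]
  have hfour : 4 * phi (pathGraph (m + 1)) m = m * (m + 1).factorial :=
    calc 4 * phi (pathGraph (m + 1)) m = (m + 1).choose 2 * 2 * m.factorial := by
          rw [show 4 = 2 * 2 from rfl, mul_assoc, htwice]; ring
      _ = m * (m + 1).factorial := by rw [hchoose, Nat.factorial_succ]; ring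
  rw [Nat.add_sub_cancel]
  omega
end
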